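/- Let N ≥ 2, ρ > 0, a ∈ EuclideanSpace ℝ (Fin N), and r ≠ a. Set I_a(r) = ((ρ² + ‖a‖²)/‖r − a‖²)·(r − a) + a. Then ‖I_a(r)‖² + ρ² = (ρ² + ‖a‖²)·(‖r‖² + ρ²)/‖r − a‖²; consequently, for any n₀ ∈ ℝ, the fish-eye index n_fe(x) = 2 n₀ ρ²/(‖x‖² + ρ²) satisfies n_fe(I_a(r)) = (‖r − a‖²/(ρ² + ‖a‖²)) · n_fe(r). -/

import Mathlib

/-! With `v = r - a` and `K = ρ² + ‖a‖²`, expanding the square gives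
`‖I_a(r)‖² = (K² + 2K⟪v, a⟫) / ‖v‖² + ‖a‖²`; adding `ρ² = K - ‖a‖²` yields
`K (K + 2⟪v, a⟫ + ‖v‖²) / ‖v‖² = K (‖v + a‖² + ρ²) / ‖v‖²`.
The fish-eye index is `2 n₀ ρ²` divided by this quantity, so it picks up the reciprocal factor. -/

theorem norm_sq_smul_add_add_sq_eq {E : Type*} [NormedAddCommGroup E] [InnerProductSpace ℝ E]
    (ρ : ℝ) (a : E) {v : E} (hv : v ≠ 0) :
    ‖((ρ ^ 2 + ‖a‖ ^ 2) / ‖v‖ ^ 2) • v + a‖ ^ 2 + ρ ^ 2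
      = (ρ ^ 2 + ‖a‖ ^ 2) * (‖v + a‖ ^ 2 + ρ ^ 2) / ‖v‖ ^ 2 := by
  have hv2 : ‖v‖ ^ 2 ≠ 0 := by positivity
  rw [norm_add_sq_real, norm_add_sq_real, norm_smul, inner_smul_left, mul_pow,
    Real.norm_eq_abs, sq_abs, RCLike.conj_to_real]
  field_simp
  ring

theorem norm_sq_inversion_add_sq_eq {E : Type*} [NormedAddCommGroup E] [InnerProductSpace ℝ E]
    (ρ : ℝ) {a x : E} (hx : x ≠ a) :
    ‖((ρ ^ 2 + ‖a‖ ^ 2) / ‖x - a‖ ^ 2) • (x - a) + a‖ ^ 2 + ρ ^ 2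
      = (ρ ^ 2 + ‖a‖ ^ 2) * (‖x‖ ^ 2 + ρ ^ 2) / ‖x - a‖ ^ 2 := by
  simpa using norm_sq_smul_add_add_sq_eq ρ a (sub_ne_zero.2 hx)

theorem fisheye_index_inversion_identity
    {N : ℕ} (ρ : ℝ)
    (a r : EuclideanSpace ℝ (Fin N)) (hr : r ≠ a)
    (Ia : EuclideanSpace ℝ (Fin N) → EuclideanSpace ℝ (Fin N))
    (hIa : Ia = fun x => ((ρ ^ 2 + ‖a‖ ^ 2) / ‖x - a‖ ^ 2) • (x - a) + a) :
    ‖Ia r‖ ^ 2 + ρ ^ 2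
        = (ρ ^ 2 + ‖a‖ ^ 2) * (‖r‖ ^ 2 + ρ ^ 2) / ‖r - a‖ ^ 2 ∧
      ∀ n₀ : ℝ,
        2 * n₀ * ρ ^ 2 / (‖Ia r‖ ^ 2 + ρ ^ 2)
          = (‖r - a‖ ^ 2 / (ρ ^ 2 + ‖a‖ ^ 2)) * (2 * n₀ * ρ ^ 2 / (‖r‖ ^ 2 + ρ ^ 2)) := by
  subst hIa
  have hsq := norm_sq_inversion_add_sq_eq ρ hr
  exact ⟨hsq, fun n₀ => by rw [hsq, div_div_eq_mul_div, div_mul_div_comm, mul_comm (‖r - a‖ ^ 2)]⟩
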